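/- Suppose g_{n,k} > 0 and δ_n² > 0 for all n, k. Then the uplink sum-power problem (P_sum^UL) has an optimal solution, its optimal power vector is unique (i.e. there is a vector p^UL such that every optimal solution (p*, a*) has p* = p^UL), and p^UL is the unique vector with strictly positive entries satisfying the fixed-point equation p = p̄_sum · T(p) / (Σ_{k=1}^K T_k(p)). -/
import Mathlib


open Finset

/-- Uplink SINR of user `k` under power vector `p` and BS association `a`. -/
noncomputable def SINRul {N K : ℕ} (g : Fin N → Fin K → ℝ) (δsq : Fin N → ℝ)
    (p : Fin K → ℝ) (a : Fin K → Fin N) (k : Fin K) : ℝ :=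
  g (a k) k * p k / (δsq (a k) + ∑ j ∈ Finset.univ.erase k, g (a k) j * p j)

/-- Minimum power needed by user `k` to achieve SINR 1 when associated with BS `n`. -/
noncomputable def Tkn {N K : ℕ} (g : Fin N → Fin K → ℝ) (δsq : Fin N → ℝ)
    (n : Fin N) (k : Fin K) (p : Fin K → ℝ) : ℝ :=
  (δsq n + ∑ j ∈ Finset.univ.erase k, g n j * p j) / g n k

/-- Minimum power needed by user `k` to achieve SINR 1, over all BS choices. -/
noncomputable def Tk {N K : ℕ} (g : Fin N → Fin K → ℝ) (δsq : Fin N → ℝ)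
    (k : Fin K) (p : Fin K → ℝ) : ℝ :=
  ⨅ n, Tkn g δsq n k p

section Helpers

variable {N K : ℕ} {g : Fin N → Fin K → ℝ} {δsq : Fin N → ℝ}

lemma ciInf_le'' {ι : Type*} [Finite ι] (f : ι → ℝ) (i : ι) : (⨅ j, f j) ≤ f i :=
  ciInf_le (Finite.bddBelow_range f) i

lemma Tkn_pos (hg : ∀ n k, 0 < g n k) (hδ : ∀ n, 0 < δsq n)
    {p : Fin K → ℝ} (hp : ∀ j, 0 ≤ p j) (n : Fin N) (k : Fin K) :
    0 < Tkn g δsq n k p := by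
  apply div_pos _ (hg n k)
  have : (0:ℝ) ≤ ∑ j ∈ Finset.univ.erase k, g n j * p j :=
    Finset.sum_nonneg fun j _ => mul_nonneg (hg n j).le (hp j)
  linarith [hδ n]

variable (hN : 0 < N)
include hN

lemma exists_Tk_eq (k : Fin K) (p : Fin K → ℝ) :
    ∃ n, Tk g δsq k p = Tkn g δsq n k p := by
  haveI : Nonempty (Fin N) := Fin.pos_iff_nonempty.mp hN
  obtain ⟨n, hn⟩ := exists_eq_ciInf_of_finite (f := fun n => Tkn g δsq n k p)
  exact ⟨n, hn.symm⟩

omit hN in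
lemma Tk_le (k : Fin K) (p : Fin K → ℝ) (n : Fin N) :
    Tk g δsq k p ≤ Tkn g δsq n k p :=
  ciInf_le'' _ n

lemma Tk_pos (hg : ∀ n k, 0 < g n k) (hδ : ∀ n, 0 < δsq n)
    {p : Fin K → ℝ} (hp : ∀ j, 0 ≤ p j) (k : Fin K) :
    0 < Tk g δsq k p := by
  obtain ⟨n, hn⟩ := exists_Tk_eq (g := g) (δsq := δsq) hN k p
  rw [hn]; exact Tkn_pos hg hδ hp n k

lemma Tk_mono (hg : ∀ n k, 0 < g n k) {p q : Fin K → ℝ} (hpq : ∀ j, p j ≤ q j) (k : Fin K) :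
    Tk g δsq k p ≤ Tk g δsq k q := by
  haveI : Nonempty (Fin N) := Fin.pos_iff_nonempty.mp hN
  refine le_ciInf fun n => le_trans (Tk_le k p n) ?_
  unfold Tkn
  apply div_le_div_of_nonneg_right _ (hg n k).le
  gcongr with j hj
  · exact (hg n j).le
  · exact hpq j

lemma Tk_scale_lt (hg : ∀ n k, 0 < g n k) (hδ : ∀ n, 0 < δsq n)
    {p : Fin K → ℝ} (hp : ∀ j, 0 ≤ p j) {t : ℝ} (ht : 1 < t) (k : Fin K) :
    Tk g δsq k (fun j => t * p j) < t * Tk g δsq k p := by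
  obtain ⟨n, hn⟩ := exists_Tk_eq (g := g) (δsq := δsq) hN k p
  refine lt_of_le_of_lt (Tk_le k _ n) ?_
  rw [hn]
  unfold Tkn
  rw [mul_div_assoc']
  apply div_lt_div_of_pos_right _ (hg n k)
  have hs : (0:ℝ) ≤ ∑ j ∈ Finset.univ.erase k, g n j * p j :=
    Finset.sum_nonneg fun j _ => mul_nonneg (hg n j).le (hp j)
  have : ∑ j ∈ Finset.univ.erase k, g n j * (t * p j)
      = t * ∑ j ∈ Finset.univ.erase k, g n j * p j := by
    rw [Finset.mul_sum]; congr 1; ext j; ring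
  rw [this, mul_add]
  have := hδ n
  nlinarith

end Helpers

section Main

variable {N K : ℕ} (g : Fin N → Fin K → ℝ) (δsq : Fin N → ℝ)

/-- Objective value of a power vector (with optimal association). -/
noncomputable def objUL (p : Fin K → ℝ) : ℝ := ⨅ k, p k / Tk g δsq k p

/-- Feasible power set. -/
def feasUL (K : ℕ) (P : ℝ) : Set (Fin K → ℝ) := {p | (∀ k, 0 ≤ p k) ∧ ∑ k, p k ≤ P}

lemma SINR_eq_Tkn (p : Fin K → ℝ) (a : Fin K → Fin N) (k : Fin K) :
    SINRul g δsq p a k = p k / Tkn g δsq (a k) k p := by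
  unfold SINRul Tkn
  rw [div_div_eq_mul_div, mul_comm]

variable {g} {δsq} (hN : 0 < N) (hg : ∀ n k, 0 < g n k) (hδ : ∀ n, 0 < δsq n)
include hN hg hδ

lemma SINR_le_ratio {p : Fin K → ℝ} (hp : ∀ j, 0 ≤ p j) (a : Fin K → Fin N) (k : Fin K) :
    SINRul g δsq p a k ≤ p k / Tk g δsq k p := by
  rw [SINR_eq_Tkn]
  exact div_le_div_of_nonneg_left (hp k) (Tk_pos hN hg hδ hp k) (Tk_le k p (a k))

omit hg hδ in
lemma exists_argmin_assoc (p : Fin K → ℝ) :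
    ∃ a : Fin K → Fin N, ∀ k, Tkn g δsq (a k) k p = Tk g δsq k p :=
  ⟨fun k => (exists_Tk_eq (g := g) (δsq := δsq) hN k p).choose,
   fun k => (exists_Tk_eq (g := g) (δsq := δsq) hN k p).choose_spec.symm⟩

lemma iInf_SINR_le_obj (hK : 0 < K) {p : Fin K → ℝ} (hp : ∀ j, 0 ≤ p j) (a : Fin K → Fin N) :
    (⨅ k, SINRul g δsq p a k) ≤ objUL g δsq p := by
  haveI : Nonempty (Fin K) := Fin.pos_iff_nonempty.mp hK
  exact le_ciInf fun k => (ciInf_le'' _ k).trans (SINR_le_ratio hN hg hδ hp a k)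

omit hN hg hδ in
lemma obj_eq_iInf_SINR {p : Fin K → ℝ} {a : Fin K → Fin N}
    (ha : ∀ k, Tkn g δsq (a k) k p = Tk g δsq k p) :
    objUL g δsq p = ⨅ k, SINRul g δsq p a k :=
  iInf_congr fun k => by rw [SINR_eq_Tkn, ha k]

omit hN hg hδ in
lemma Tk_update_self (p : Fin K → ℝ) (k : Fin K) (x : ℝ) :
    Tk g δsq k (Function.update p k x) = Tk g δsq k p := by
  unfold Tk Tkn
  refine iInf_congr fun n => ?_
  congr 1
  congr 1
  exact Finset.sum_congr rfl fun j hj => by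
    rw [Function.update_of_ne (Finset.mem_erase.mp hj).1]

omit hδ in
lemma Tk_update_lt {p : Fin K → ℝ} {k j : Fin K} (hjk : j ≠ k) {ε : ℝ} (hε : 0 < ε) :
    Tk g δsq j (Function.update p k (p k - ε)) < Tk g δsq j p := by
  obtain ⟨n, hn⟩ := exists_Tk_eq (g := g) (δsq := δsq) hN j p
  refine lt_of_le_of_lt (Tk_le j _ n) ?_
  rw [hn]
  unfold Tkn
  apply div_lt_div_of_pos_right _ (hg n j)
  have hk : k ∈ Finset.univ.erase j := Finset.mem_erase.mpr ⟨fun h => hjk h.symm, Finset.mem_univ k⟩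
  have e1 : ∑ i ∈ Finset.univ.erase j, g n i * (Function.update p k (p k - ε)) i
      = g n k * (p k - ε) + ∑ i ∈ (Finset.univ.erase j).erase k, g n i * p i := by
    rw [← Finset.add_sum_erase _ _ hk, Function.update_self]
    congr 1
    exact Finset.sum_congr rfl fun i hi => by
      rw [Function.update_of_ne (Finset.mem_erase.mp hi).1]
  have e2 : ∑ i ∈ Finset.univ.erase j, g n i * p i
      = g n k * p k + ∑ i ∈ (Finset.univ.erase j).erase k, g n i * p i := by
    rw [← Finset.add_sum_erase _ _ hk]
  rw [e1, e2]
  have := mul_pos (hg n k) hε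
  linarith

end Main

section Cont

variable {N K : ℕ} {g : Fin N → Fin K → ℝ} {δsq : Fin N → ℝ}

lemma continuous_Tkn (n : Fin N) (k : Fin K) :
    Continuous fun p : Fin K → ℝ => Tkn g δsq n k p := by
  unfold Tkn
  exact (continuous_const.add (continuous_finset_sum _ fun j _ =>
    continuous_const.mul (continuous_apply j))).div_const _

lemma continuous_Tk (hN : 0 < N) (k : Fin K) :
    Continuous fun p : Fin K → ℝ => Tk g δsq k p := by
  haveI : Nonempty (Fin N) := Fin.pos_iff_nonempty.mp hN
  unfold Tk
  simp only [← Finset.inf'_univ_eq_ciInf]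
  exact Continuous.finset_inf'_apply _ fun n _ => continuous_Tkn n k

lemma continuousOn_obj (hN : 0 < N) (hK : 0 < K) (hg : ∀ n k, 0 < g n k)
    (hδ : ∀ n, 0 < δsq n) (P : ℝ) :
    ContinuousOn (objUL g δsq) (feasUL K P) := by
  haveI : Nonempty (Fin K) := Fin.pos_iff_nonempty.mp hK
  unfold objUL
  simp only [← Finset.inf'_univ_eq_ciInf]
  refine ContinuousOn.finset_inf'_apply _ fun k _ => ?_
  exact ContinuousOn.div (continuous_apply k).continuousOn
    (continuous_Tk hN k).continuousOn
    (fun p hp => (Tk_pos hN hg hδ hp.1 k).ne')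

lemma isCompact_feas (K : ℕ) (P : ℝ) : IsCompact (feasUL K P) := by
  have hsub : feasUL K P ⊆ Set.Icc (0 : Fin K → ℝ) (fun _ => P) := by
    rintro p ⟨hp, hsum⟩
    refine ⟨fun k => hp k, fun k => ?_⟩
    calc p k ≤ ∑ j, p j := Finset.single_le_sum (fun j _ => hp j) (Finset.mem_univ k)
    _ ≤ P := hsum
  have hclosed : IsClosed (feasUL K P) := by
    have h1 : IsClosed {p : Fin K → ℝ | ∀ k, 0 ≤ p k} := by
      have : {p : Fin K → ℝ | ∀ k, 0 ≤ p k} = ⋂ k, {p | 0 ≤ p k} := by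
        ext p; simp
      rw [this]
      exact isClosed_iInter fun k => isClosed_le continuous_const (continuous_apply k)
    have h2 : IsClosed {p : Fin K → ℝ | ∑ k, p k ≤ P} :=
      isClosed_le (continuous_finset_sum _ fun k _ => continuous_apply k) continuous_const
    exact h1.inter h2
  exact IsCompact.of_isClosed_subset isCompact_Icc hclosed hsub

lemma exists_maximizer (hN : 0 < N) (hK : 0 < K) (hg : ∀ n k, 0 < g n k)
    (hδ : ∀ n, 0 < δsq n) {P : ℝ} (hP : 0 ≤ P) :
    ∃ p ∈ feasUL K P, ∀ q ∈ feasUL K P, objUL g δsq q ≤ objUL g δsq p := by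
  have hne : (feasUL K P).Nonempty := ⟨0, fun k => le_refl 0, by simpa using hP⟩
  obtain ⟨p, hp, hmax⟩ := (isCompact_feas K P).exists_isMaxOn hne
    (continuousOn_obj hN hK hg hδ P)
  exact ⟨p, hp, fun q hq => hmax hq⟩

end Cont

section Char

variable {N K : ℕ} {g : Fin N → Fin K → ℝ} {δsq : Fin N → ℝ}

lemma maxOn_char (hN : 0 < N) (hK : 0 < K) (hg : ∀ n k, 0 < g n k) (hδ : ∀ n, 0 < δsq n)
    {P : ℝ} (hP : 0 < P) {p : Fin K → ℝ} (hfeas : p ∈ feasUL K P)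
    (hmax : ∀ q ∈ feasUL K P, objUL g δsq q ≤ objUL g δsq p) :
    (∀ k, 0 < p k) ∧ (∑ k, p k = P) ∧
    (∀ k, p k = P * Tk g δsq k p / ∑ j, Tk g δsq j p) := by
  haveI nK : Nonempty (Fin K) := Fin.pos_iff_nonempty.mp hK
  obtain ⟨hp0, hpsum⟩ := hfeas
  set C := objUL g δsq p with hC
  have hTpos : ∀ k, 0 < Tk g δsq k p := Tk_pos hN hg hδ hp0
  have hCpos : 0 < C := by
    set q : Fin K → ℝ := fun _ => P / K with hq
    have hq0 : ∀ k, 0 < q k := fun k => div_pos hP (by exact_mod_cast hK)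
    have hqfeas : q ∈ feasUL K P := by
      refine ⟨fun k => (hq0 k).le, ?_⟩
      have : ∑ _k : Fin K, P / (K:ℝ) = K * (P / K) := by
        rw [Finset.sum_const, Finset.card_univ, Fintype.card_fin, nsmul_eq_mul]
      rw [hq, this, mul_div_cancel₀ _ (by exact_mod_cast hK.ne' : (K:ℝ) ≠ 0)]
    refine lt_of_lt_of_le ?_ (hmax q hqfeas)
    obtain ⟨k, hk⟩ := exists_eq_ciInf_of_finite (f := fun k => q k / Tk g δsq k q)
    unfold objUL
    rw [← hk]
    exact div_pos (hq0 k) (Tk_pos hN hg hδ (fun j => (hq0 j).le) k)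
  have hge : ∀ k, C ≤ p k / Tk g δsq k p := fun k => ciInf_le'' _ k
  have hppos : ∀ k, 0 < p k := by
    intro k
    have h := lt_of_lt_of_le hCpos (hge k)
    have := (lt_div_iff₀ (hTpos k)).mp h
    linarith
  have hle : ∀ k, p k / Tk g δsq k p ≤ C := by
    by_contra h
    push_neg at h
    obtain ⟨k, hk⟩ := h
    have hCT : C * Tk g δsq k p < p k := (lt_div_iff₀ (hTpos k)).mp hk
    set ε := (p k - C * Tk g δsq k p) / 2 with hε
    have hεpos : 0 < ε := by rw [hε]; linarith
    set p' := Function.update p k (p k - ε) with hp'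
    have hCTpos : 0 < C * Tk g δsq k p := mul_pos hCpos (hTpos k)
    have hp'0 : ∀ j, 0 ≤ p' j := by
      intro j
      by_cases hj : j = k
      · subst hj; rw [hp', Function.update_self, hε]; linarith
      · rw [hp', Function.update_of_ne hj]; exact hp0 j
    have hp'sum : ∑ j, p' j ≤ P := by
      rw [hp', Finset.sum_update_of_mem (Finset.mem_univ k),
        Finset.sdiff_singleton_eq_erase]
      have herase : ∑ j ∈ Finset.univ.erase k, p j = (∑ j, p j) - p k := by
        rw [← Finset.add_sum_erase _ _ (Finset.mem_univ k)]; ring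
      rw [herase]; linarith
    have hobj : objUL g δsq p' ≤ C := hmax p' ⟨hp'0, hp'sum⟩
    have hrat : ∀ j, C < p' j / Tk g δsq j p' := by
      intro j
      by_cases hj : j = k
      · subst hj
        rw [hp', Tk_update_self, Function.update_self, lt_div_iff₀ (hTpos j), hε]
        linarith
      · have hTlt : Tk g δsq j p' < Tk g δsq j p := Tk_update_lt hN hg hj hεpos
        have hT'pos : 0 < Tk g δsq j p' := Tk_pos hN hg hδ hp'0 j
        calc C ≤ p j / Tk g δsq j p := hge j
        _ < p j / Tk g δsq j p' := div_lt_div_of_pos_left (hppos j) hT'pos hTlt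
        _ = p' j / Tk g δsq j p' := by rw [hp', Function.update_of_ne hj]
    obtain ⟨j0, hj0⟩ := exists_eq_ciInf_of_finite (f := fun j => p' j / Tk g δsq j p')
    have : C < objUL g δsq p' := by unfold objUL; rw [← hj0]; exact hrat j0
    linarith
  have heq : ∀ k, p k = C * Tk g δsq k p := by
    intro k
    have h1 : p k ≤ C * Tk g δsq k p := (div_le_iff₀ (hTpos k)).mp (hle k)
    have h2 : C * Tk g δsq k p ≤ p k := (le_div_iff₀ (hTpos k)).mp (hge k)
    linarith
  have hsum_eq : ∑ k, p k = C * ∑ j, Tk g δsq j p := by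
    rw [Finset.mul_sum]
    exact Finset.sum_congr rfl fun k _ => heq k
  have hsumP : ∑ k, p k = P := by
    by_contra hne
    have hlt : ∑ k, p k < P := lt_of_le_of_ne hpsum hne
    have hSpos : 0 < ∑ k, p k := Finset.sum_pos (fun k _ => hppos k) Finset.univ_nonempty
    set t := P / ∑ k, p k with ht
    have ht1 : 1 < t := (one_lt_div hSpos).mpr hlt
    set p'' : Fin K → ℝ := fun j => t * p j with hp''
    have hp''0 : ∀ j, 0 ≤ p'' j := fun j => mul_nonneg (by linarith) (hp0 j)
    have hfeas'' : p'' ∈ feasUL K P := by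
      refine ⟨hp''0, ?_⟩
      rw [hp'']
      simp only []
      rw [← Finset.mul_sum, ht, div_mul_cancel₀ _ hSpos.ne']
    have hrat : ∀ j, C < p'' j / Tk g δsq j p'' := by
      intro j
      have hTlt := Tk_scale_lt hN hg hδ hp0 ht1 j
      have hT''pos : 0 < Tk g δsq j p'' := Tk_pos hN hg hδ hp''0 j
      have hstep : p'' j / (t * Tk g δsq j p) < p'' j / Tk g δsq j p'' :=
        div_lt_div_of_pos_left (mul_pos (by linarith) (hppos j)) hT''pos hTlt
      have h2 : p'' j / (t * Tk g δsq j p) = p j / Tk g δsq j p := by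
        rw [hp'']
        rw [mul_div_mul_left _ _ (by linarith : t ≠ 0)]
      calc C ≤ p j / Tk g δsq j p := hge j
      _ = p'' j / (t * Tk g δsq j p) := h2.symm
      _ < p'' j / Tk g δsq j p'' := hstep
    obtain ⟨j0, hj0⟩ := exists_eq_ciInf_of_finite (f := fun j => p'' j / Tk g δsq j p'')
    have hlt2 : C < objUL g δsq p'' := by unfold objUL; rw [← hj0]; exact hrat j0
    have := hmax p'' hfeas''
    linarith
  have hTS : 0 < ∑ j, Tk g δsq j p := Finset.sum_pos (fun j _ => hTpos j) Finset.univ_nonempty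
  have hCval : C = P / ∑ j, Tk g δsq j p := by
    rw [eq_div_iff hTS.ne', ← hsum_eq, hsumP]
  refine ⟨hppos, hsumP, fun k => ?_⟩
  rw [heq k, hCval, div_mul_eq_mul_div]

end Char

section FP

variable {N K : ℕ} {g : Fin N → Fin K → ℝ} {δsq : Fin N → ℝ}

lemma fp_sum (hN : 0 < N) (hK : 0 < K) (hg : ∀ n k, 0 < g n k) (hδ : ∀ n, 0 < δsq n)
    {P : ℝ} {p : Fin K → ℝ} (hp : ∀ k, 0 < p k)
    (hfp : ∀ k, p k = P * Tk g δsq k p / ∑ j, Tk g δsq j p) :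
    ∑ k, p k = P := by
  haveI nK : Nonempty (Fin K) := Fin.pos_iff_nonempty.mp hK
  have hTp : ∀ k, 0 < Tk g δsq k p := Tk_pos hN hg hδ (fun k => (hp k).le)
  have hS : 0 < ∑ j, Tk g δsq j p := Finset.sum_pos (fun j _ => hTp j) Finset.univ_nonempty
  calc ∑ k, p k = ∑ k, P * Tk g δsq k p / ∑ j, Tk g δsq j p :=
        Finset.sum_congr rfl fun k _ => hfp k
  _ = (∑ k, P * Tk g δsq k p) / ∑ j, Tk g δsq j p := by rw [← Finset.sum_div]
  _ = P * (∑ j, Tk g δsq j p) / ∑ j, Tk g δsq j p := by rw [← Finset.mul_sum]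
  _ = P := by rw [mul_div_assoc, div_self hS.ne', mul_one]

lemma fp_claim (hN : 0 < N) (hK : 0 < K) (hg : ∀ n k, 0 < g n k) (hδ : ∀ n, 0 < δsq n)
    {P : ℝ} (hP : 0 < P) {p q : Fin K → ℝ}
    (hp : ∀ k, 0 < p k) (hq : ∀ k, 0 < q k)
    (hfp : ∀ k, p k = P * Tk g δsq k p / ∑ j, Tk g δsq j p)
    (hfq : ∀ k, q k = P * Tk g δsq k q / ∑ j, Tk g δsq j q)
    (hex : ∃ j, p j < q j) :
    P / (∑ j, Tk g δsq j p) < P / (∑ j, Tk g δsq j q) := by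
  haveI nK : Nonempty (Fin K) := Fin.pos_iff_nonempty.mp hK
  have hTp : ∀ k, 0 < Tk g δsq k p := Tk_pos hN hg hδ (fun k => (hp k).le)
  have hTq : ∀ k, 0 < Tk g δsq k q := Tk_pos hN hg hδ (fun k => (hq k).le)
  have hSp : 0 < ∑ j, Tk g δsq j p := Finset.sum_pos (fun j _ => hTp j) Finset.univ_nonempty
  have hSq : 0 < ∑ j, Tk g δsq j q := Finset.sum_pos (fun j _ => hTq j) Finset.univ_nonempty
  set cp := P / ∑ j, Tk g δsq j p with hcp
  set cq := P / ∑ j, Tk g δsq j q with hcq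
  have hcppos : 0 < cp := div_pos hP hSp
  have hcqpos : 0 < cq := div_pos hP hSq
  have hfp' : ∀ k, p k = cp * Tk g δsq k p := by
    intro k; rw [hfp k, hcp, div_mul_eq_mul_div, mul_comm P, mul_div_assoc, mul_comm]
  have hfq' : ∀ k, q k = cq * Tk g δsq k q := by
    intro k; rw [hfq k, hcq, div_mul_eq_mul_div, mul_comm P, mul_div_assoc, mul_comm]
  obtain ⟨j, hj⟩ := hex
  obtain ⟨k0, hk0⟩ := Finite.exists_max (fun k => q k / p k)
  set μ := q k0 / p k0 with hμ
  have hμ1 : 1 < μ := lt_of_lt_of_le ((one_lt_div (hp j)).mpr hj) (hk0 j)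
  have hbound : ∀ k, q k ≤ μ * p k := by
    intro k
    have := (div_le_iff₀ (hp k)).mp (hk0 k)
    linarith [this]
  have hmono : Tk g δsq k0 q ≤ Tk g δsq k0 (fun j => μ * p j) :=
    Tk_mono hN hg hbound k0
  have hstrict : Tk g δsq k0 (fun j => μ * p j) < μ * Tk g δsq k0 p :=
    Tk_scale_lt hN hg hδ (fun j => (hp j).le) hμ1 k0
  have hqk0 : q k0 = μ * p k0 := (div_mul_cancel₀ _ (hp k0).ne').symm
  have hkey : μ * p k0 < cq * (μ * Tk g δsq k0 p) := by
    calc μ * p k0 = q k0 := hqk0.symm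
    _ = cq * Tk g δsq k0 q := hfq' k0
    _ ≤ cq * Tk g δsq k0 (fun j => μ * p j) := by
        exact mul_le_mul_of_nonneg_left hmono hcqpos.le
    _ < cq * (μ * Tk g δsq k0 p) := by
        exact mul_lt_mul_of_pos_left hstrict hcqpos
  have hpk0 : p k0 < cq * Tk g δsq k0 p := by
    have hμpos : 0 < μ := by linarith
    nlinarith
  have : cp * Tk g δsq k0 p < cq * Tk g δsq k0 p := by rw [← hfp' k0]; exact hpk0
  exact lt_of_mul_lt_mul_right (by linarith [this]) (hTp k0).le

lemma fp_unique (hN : 0 < N) (hK : 0 < K) (hg : ∀ n k, 0 < g n k) (hδ : ∀ n, 0 < δsq n)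
    {P : ℝ} (hP : 0 < P) {p q : Fin K → ℝ}
    (hp : ∀ k, 0 < p k) (hq : ∀ k, 0 < q k)
    (hfp : ∀ k, p k = P * Tk g δsq k p / ∑ j, Tk g δsq j p)
    (hfq : ∀ k, q k = P * Tk g δsq k q / ∑ j, Tk g δsq j q) :
    p = q := by
  by_contra hne
  have hsump : ∑ k, p k = P := fp_sum hN hK hg hδ hp hfp
  have hsumq : ∑ k, q k = P := fp_sum hN hK hg hδ hq hfq
  have h1 : ∃ j, p j < q j := by
    by_contra h
    push_neg at h
    have heq : ∀ k ∈ Finset.univ, q k = p k :=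
      (Finset.sum_eq_sum_iff_of_le fun k _ => h k).mp (by rw [hsump, hsumq])
    exact hne (funext fun k => (heq k (Finset.mem_univ k)).symm)
  have h2 : ∃ j, q j < p j := by
    by_contra h
    push_neg at h
    have heq : ∀ k ∈ Finset.univ, p k = q k :=
      (Finset.sum_eq_sum_iff_of_le fun k _ => h k).mp (by rw [hsump, hsumq])
    exact hne (funext fun k => heq k (Finset.mem_univ k))
  have c1 := fp_claim hN hK hg hδ hP hp hq hfp hfq h1
  have c2 := fp_claim hN hK hg hδ hP hq hp hfq hfp h2
  linarith

end FP

/-- The uplink sum-power problem (P_sum^UL) has an optimal solution, its optimal power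
vector `p^UL` is unique, and `p^UL` is the unique strictly positive solution of the
fixed-point equation `p = p̄_sum · T(p) / (∑_k T_k(p))`. -/

theorem unique_optimal_power_and_fixed_point (N K : ℕ) (hN : 0 < N) (hK : 0 < K)
    (g : Fin N → Fin K → ℝ) (hg : ∀ n k, 0 < g n k)
    (δsq : Fin N → ℝ) (hδ : ∀ n, 0 < δsq n)
    (pbar : Fin N → ℝ) (hpbar : ∀ n, 0 < pbar n) :
    ∃ pUL : Fin K → ℝ,
      -- (P_sum^UL) has an optimal solution with power vector pUL
      (∃ aUL : Fin K → Fin N,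
        (∀ k, 0 ≤ pUL k) ∧ (∑ k, pUL k ≤ ∑ n, pbar n) ∧
        ∀ (p : Fin K → ℝ) (a : Fin K → Fin N),
          (∀ k, 0 ≤ p k) → (∑ k, p k ≤ ∑ n, pbar n) →
          (⨅ k, SINRul g δsq p a k) ≤ ⨅ k, SINRul g δsq pUL aUL k) ∧
      -- every optimal solution has power vector pUL
      (∀ (pstar : Fin K → ℝ) (astar : Fin K → Fin N),
        (∀ k, 0 ≤ pstar k) → (∑ k, pstar k ≤ ∑ n, pbar n) →
        (∀ (p : Fin K → ℝ) (a : Fin K → Fin N),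
          (∀ k, 0 ≤ p k) → (∑ k, p k ≤ ∑ n, pbar n) →
          (⨅ k, SINRul g δsq p a k) ≤ ⨅ k, SINRul g δsq pstar astar k) →
        pstar = pUL) ∧
      -- pUL is a strictly positive fixed point
      (∀ k, 0 < pUL k) ∧
      (∀ k, pUL k = (∑ n, pbar n) * Tk g δsq k pUL / ∑ j, Tk g δsq j pUL) ∧
      -- and it is the unique such fixed point
      (∀ p : Fin K → ℝ, (∀ k, 0 < p k) →
        (∀ k, p k = (∑ n, pbar n) * Tk g δsq k p / ∑ j, Tk g δsq j p) →
        p = pUL) := by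
  haveI nK : Nonempty (Fin K) := Fin.pos_iff_nonempty.mp hK
  haveI nN : Nonempty (Fin N) := Fin.pos_iff_nonempty.mp hN
  have hP : 0 < ∑ n, pbar n := Finset.sum_pos (fun n _ => hpbar n) Finset.univ_nonempty
  obtain ⟨pUL, hfeas, hmax⟩ := exists_maximizer hN hK hg hδ hP.le
  obtain ⟨hpos, hsum, hfp⟩ := maxOn_char hN hK hg hδ hP hfeas hmax
  obtain ⟨aUL, haUL⟩ := exists_argmin_assoc (g := g) (δsq := δsq) hN pUL
  have hobj_eq : objUL g δsq pUL = ⨅ k, SINRul g δsq pUL aUL k := obj_eq_iInf_SINR haUL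
  refine ⟨pUL, ⟨aUL, fun k => (hpos k).le, hsum.le, ?_⟩, ?_, hpos, hfp, ?_⟩
  · intro p a hp hsump
    calc (⨅ k, SINRul g δsq p a k) ≤ objUL g δsq p := iInf_SINR_le_obj hN hg hδ hK hp a
    _ ≤ objUL g δsq pUL := hmax p ⟨hp, hsump⟩
    _ = ⨅ k, SINRul g δsq pUL aUL k := hobj_eq
  · intro pstar astar hps hpssum hopt
    have hmaxstar : ∀ q ∈ feasUL K (∑ n, pbar n), objUL g δsq q ≤ objUL g δsq pstar := by
      intro q hq
      obtain ⟨aq, haq⟩ := exists_argmin_assoc (g := g) (δsq := δsq) hN q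
      calc objUL g δsq q = ⨅ k, SINRul g δsq q aq k := obj_eq_iInf_SINR haq
      _ ≤ ⨅ k, SINRul g δsq pstar astar k := hopt q aq hq.1 hq.2
      _ ≤ objUL g δsq pstar := iInf_SINR_le_obj hN hg hδ hK hps astar
    obtain ⟨hpos', hsum', hfp'⟩ := maxOn_char hN hK hg hδ hP ⟨hps, hpssum⟩ hmaxstar
    exact fp_unique hN hK hg hδ hP hpos' hpos hfp' hfp
  · intro p hp hpfp
    exact fp_unique hN hK hg hδ hP hp hpos hpfp hfp
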